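/- For all real a ≥ 0 and b ≥ 0, the polynomial φ₂(a,b) = a⁴ − 3a³b − 2a³ + 8a²b² + 4a²b + a² − 3ab³ + 4ab² − ab + b⁴ − 2b³ + b² satisfies φ₂(a,b) ≥ 0, and φ₂(a,b) = 0 if and only if (a,b) ∈ {(0,0), (1,0), (0,1)}. (Nonnegativity and zero set of φ₂ in the proof of Lemma 5.1.) -/
import Mathlib

/-- φ₂(a,b) = a⁴ − 3a³b − 2a³ + 8a²b² + 4a²b + a² − 3ab³ + 4ab² − ab + b⁴ − 2b³ + b². -/
def φ₂ (a b : ℝ) : ℝ :=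
  a^4 - 3*a^3*b - 2*a^3 + 8*a^2*b^2 + 4*a^2*b + a^2 - 3*a*b^3 + 4*a*b^2 - a*b
    + b^4 - 2*b^3 + b^2

/-- Nonnegativity and zero set of φ₂ (proof of Lemma 5.1). -/
theorem phi2_nonneg_and_zero_set (a b : ℝ) (ha : 0 ≤ a) (hb : 0 ≤ b) :
    0 ≤ φ₂ a b ∧
    (φ₂ a b = 0 ↔ (a, b) = (0, 0) ∨ (a, b) = (1, 0) ∨ (a, b) = (0, 1)) := by
  have key1 : 4 * φ₂ a b = 4*(a-b)^4 + (a-b)^2*(3 - 10*(a+b) - (a+b)^2)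
      + (a+b)^2*(a+b+1)^2 := by unfold φ₂; ring
  have key2 : 64 * φ₂ a b = (32*a*b - (7*(a+b)-3)*((a+b)-1))^2
      + 3*((a+b)-1)^2*((a+b)+3)*(5*(a+b)-1) := by unfold φ₂; ring
  rcases le_or_gt (a+b) (1/5) with hs | hs
  · -- small sum case
    have hcoef : 0 ≤ 3 - 10*(a+b) - (a+b)^2 := by nlinarith [add_nonneg ha hb]
    have h1 : 0 ≤ 4*(a-b)^4 := by positivity
    have h2 : 0 ≤ (a-b)^2*(3 - 10*(a+b) - (a+b)^2) := mul_nonneg (sq_nonneg _) hcoef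
    have h3 : 0 ≤ (a+b)^2*(a+b+1)^2 := by positivity
    constructor
    · linarith
    constructor
    · intro h0
      rw [h0, mul_zero] at key1
      have hz : (a+b)^2*(a+b+1)^2 = 0 := by linarith
      have hab : a + b = 0 := by
        rcases mul_eq_zero.mp hz with h | h
        · exact pow_eq_zero_iff two_ne_zero |>.mp h
        · nlinarith [sq_nonneg (a+b)]
      have ha0 : a = 0 := le_antisymm (by linarith) ha
      have hb0 : b = 0 := le_antisymm (by linarith) hb
      left; simp [ha0, hb0]
    · rintro (h | h | h) <;>
        · simp only [Prod.mk.injEq] at h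
          obtain ⟨rfl, rfl⟩ := h
          unfold φ₂; norm_num
  · -- large sum case
    have hp3 : (0:ℝ) < (a+b)+3 := by linarith
    have hp5 : (0:ℝ) < 5*(a+b)-1 := by linarith
    have h1 : 0 ≤ (32*a*b - (7*(a+b)-3)*((a+b)-1))^2 := sq_nonneg _
    have h2 : 0 ≤ 3*((a+b)-1)^2*((a+b)+3)*(5*(a+b)-1) := by positivity
    constructor
    · linarith
    constructor
    · intro h0
      rw [h0, mul_zero] at key2
      have hz2 : 3*((a+b)-1)^2*((a+b)+3)*(5*(a+b)-1) = 0 := by linarith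
      have hsq : ((a+b)-1)^2 * (((a+b)+3)*(5*(a+b)-1)) = 0 := by
        linear_combination hz2 / 3
      have hs1 : a + b = 1 := by
        rcases mul_eq_zero.mp hsq with h | h
        · have := pow_eq_zero_iff two_ne_zero |>.mp h; linarith
        · exact absurd h (ne_of_gt (mul_pos hp3 hp5))
      have hT : 3*((a+b)-1)^2*((a+b)+3)*(5*(a+b)-1) = 0 := by rw [hs1]; ring
      have hX2 : (32*a*b - (7*(a+b)-3)*((a+b)-1))^2 = 0 := by linarith
      have hX : 32*a*b - (7*(a+b)-3)*((a+b)-1) = 0 :=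
        pow_eq_zero_iff two_ne_zero |>.mp hX2
      have hab0 : a * b = 0 := by
        rw [hs1] at hX; linarith [hX]
      rcases mul_eq_zero.mp hab0 with h | h
      · right; right; rw [Prod.mk.injEq]; exact ⟨h, by linarith⟩
      · right; left; rw [Prod.mk.injEq]; exact ⟨by linarith, h⟩
    · rintro (h | h | h) <;>
        · simp only [Prod.mk.injEq] at h
          obtain ⟨rfl, rfl⟩ := h
          unfold φ₂; norm_num
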